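/- Let h : ℝⁿ → ℝ be measurable with sup_{x} |e^{(3t/4)Δ}(|e^{(t/4)Δ} h|²)(x)|^{1/2} well-defined. Then for all x ∈ ℝⁿ and 0 < s < t/2, the averaged quantity ⨍_{B(x,s^{1/2})} |e^{(t−s)Δ} h(y)|² dy ≤ C · e^{(3t/4)Δ}( |e^{(t/4)Δ} h|² )(x), with C depending only on n. -/

import Mathlib

/-!
Put `g = e^{(t/4)Δ}h`, so that `e^{(t-s)Δ}h = e^{(3t/4-s)Δ}g` by the semigroup law, which is the
Gaussian convolution identity `G_a ∗ G_b = G_{a+b}` (complete the square in the exponent).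
Since `G_τ(y - ·)` is a probability density, Jensen gives `|e^{(t-s)Δ}h|² ≤ e^{(3t/4-s)Δ}|g|²`
pointwise. On `B(x, √s)` the kernel `G_s(x - ·)` is at least `e^{-1/4}(4πs)^{-n/2}`, a fixed
multiple of `1/|B(x, √s)|`, so averaging a nonnegative function over the ball is dominated by
applying `e^{sΔ}` at `x`; finally `e^{sΔ}e^{(3t/4-s)Δ} = e^{(3t/4)Δ}`.
-/

open MeasureTheory Metric Real

/-- The Gaussian heat kernel `G_t(x) = (4πt)^{-n/2} exp(-|x|²/(4t))` on ℝⁿ. -/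
noncomputable def heatKernel (n : ℕ) (t : ℝ) (x : EuclideanSpace ℝ (Fin n)) : ℝ :=
  (4 * π * t) ^ (-(n : ℝ) / 2) * Real.exp (-‖x‖ ^ 2 / (4 * t))

/-- The heat semigroup `e^{τΔ}h = G_τ ∗ h` acting on scalar functions. -/
noncomputable def heat (n : ℕ) (τ : ℝ) (h : EuclideanSpace ℝ (Fin n) → ℝ)
    (x : EuclideanSpace ℝ (Fin n)) : ℝ :=
  ∫ y, heatKernel n τ (x - y) * h y

theorem norm_sub_sq_div_add_norm_sq_div {V : Type*} [NormedAddCommGroup V]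
    [InnerProductSpace ℝ V] {a b : ℝ} (ha : 0 < a) (hb : 0 < b) (u v : V) :
    ‖u - v‖ ^ 2 / (4 * a) + ‖v‖ ^ 2 / (4 * b)
      = ‖v - (b / (a + b)) • u‖ ^ 2 / (4 * (a * b / (a + b))) + ‖u‖ ^ 2 / (4 * (a + b)) := by
  rw [norm_sub_sq_real, norm_sub_sq_real, norm_smul, inner_smul_right, real_inner_comm,
    Real.norm_of_nonneg (by positivity)]
  field_simp
  ring

variable {n : ℕ}

theorem integral_exp_neg_norm_sub_sq_div {t : ℝ} (ht : 0 < t) (c : EuclideanSpace ℝ (Fin n)) :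
    ∫ y, exp (-‖y - c‖ ^ 2 / (4 * t)) = (4 * π * t) ^ ((n : ℝ) / 2) := by
  have h := GaussianFourier.integral_rexp_neg_mul_sq_norm (V := EuclideanSpace ℝ (Fin n))
    (inv_pos.2 (by positivity : 0 < 4 * t))
  rw [finrank_euclideanSpace_fin, div_inv_eq_mul, ← mul_assoc, mul_comm π 4] at h
  rw [integral_sub_right_eq_self (fun y => exp (-‖y‖ ^ 2 / (4 * t))) c, ← h]
  congr with y
  ring_nf

theorem heatKernel_pos {t : ℝ} (ht : 0 < t) (x : EuclideanSpace ℝ (Fin n)) :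
    0 < heatKernel n t x := by
  unfold heatKernel
  have : 0 < 4 * π * t := by positivity
  positivity

theorem continuous_heatKernel (t : ℝ) : Continuous (heatKernel n t) := by
  unfold heatKernel
  fun_prop

theorem integral_heatKernel {t : ℝ} (ht : 0 < t) : ∫ x, heatKernel n t x = 1 := by
  have h := integral_exp_neg_norm_sub_sq_div (n := n) ht 0
  simp only [sub_zero] at h
  simp only [heatKernel]
  rw [integral_const_mul, h, neg_div, rpow_neg (by positivity), inv_mul_cancel₀ (by positivity)]

theorem integrable_heatKernel {t : ℝ} (ht : 0 < t) : Integrable (heatKernel n t) :=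
  .of_integral_ne_zero (by rw [integral_heatKernel ht]; exact one_ne_zero)

theorem heatKernel_sub_mul_heatKernel {a b : ℝ} (ha : 0 < a) (hb : 0 < b)
    (u v : EuclideanSpace ℝ (Fin n)) :
    heatKernel n a (u - v) * heatKernel n b v
      = (4 * π * a) ^ (-(n : ℝ) / 2) * (4 * π * b) ^ (-(n : ℝ) / 2)
          * exp (-‖u‖ ^ 2 / (4 * (a + b)))
        * exp (-‖v - (b / (a + b)) • u‖ ^ 2 / (4 * (a * b / (a + b)))) := by
  have hexp : exp (-‖u - v‖ ^ 2 / (4 * a)) * exp (-‖v‖ ^ 2 / (4 * b))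
      = exp (-‖u‖ ^ 2 / (4 * (a + b)))
        * exp (-‖v - (b / (a + b)) • u‖ ^ 2 / (4 * (a * b / (a + b)))) := by
    rw [← exp_add, ← exp_add]
    congr 1
    simp only [neg_div]
    linarith [norm_sub_sq_div_add_norm_sq_div ha hb u v]
  simp only [heatKernel]
  linear_combination (4 * π * a) ^ (-(n : ℝ) / 2) * (4 * π * b) ^ (-(n : ℝ) / 2) * hexp

theorem integral_heatKernel_mul_heatKernel {a b : ℝ} (ha : 0 < a) (hb : 0 < b)
    (x z : EuclideanSpace ℝ (Fin n)) :
    ∫ y, heatKernel n a (x - y) * heatKernel n b (y - z) = heatKernel n (a + b) (x - z) := by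
  have hA : 0 < 4 * π * a := by positivity
  have hB : 0 < 4 * π * b := by positivity
  have hAB : 0 < 4 * π * (a + b) := by positivity
  have hconst : (4 * π * a) ^ (-(n : ℝ) / 2) * (4 * π * b) ^ (-(n : ℝ) / 2)
      * (4 * π * (a * b / (a + b))) ^ ((n : ℝ) / 2) = (4 * π * (a + b)) ^ (-(n : ℝ) / 2) := by
    rw [show 4 * π * (a * b / (a + b)) = 4 * π * a * (4 * π * b) / (4 * π * (a + b)) by
        field_simp,
      div_rpow (by positivity) hAB.le, mul_rpow hA.le hB.le, neg_div, rpow_neg hA.le,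
      rpow_neg hB.le, rpow_neg hAB.le]
    field_simp
  have hshift := integral_sub_right_eq_self (μ := volume)
    (fun v => heatKernel n a (x - z - v) * heatKernel n b v) z
  simp only [sub_sub_sub_cancel_right] at hshift
  simp_rw [hshift, heatKernel_sub_mul_heatKernel ha hb]
  rw [integral_const_mul, integral_exp_neg_norm_sub_sq_div (by positivity), heatKernel, ← hconst]
  ring

theorem integral_heatKernel_sub {t : ℝ} (ht : 0 < t) (x : EuclideanSpace ℝ (Fin n)) :
    ∫ y, heatKernel n t (x - y) = 1 := by
  rw [integral_sub_left_eq_self (heatKernel n t) volume x, integral_heatKernel ht]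

section BoundedMeasurable

variable {t M : ℝ} {h : EuclideanSpace ℝ (Fin n) → ℝ}

theorem integrable_heatKernel_sub_mul (ht : 0 < t) (hm : Measurable h) (hM : ∀ y, |h y| ≤ M)
    (x : EuclideanSpace ℝ (Fin n)) : Integrable (fun y => heatKernel n t (x - y) * h y) :=
  ((integrable_heatKernel ht).comp_sub_left x).mul_bdd hm.aestronglyMeasurable
    (ae_of_all _ fun y => (norm_eq_abs (h y)).trans_le (hM y))

theorem heat_nonneg (ht : 0 < t) (h0 : ∀ y, 0 ≤ h y) (x : EuclideanSpace ℝ (Fin n)) :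
    0 ≤ heat n t h x :=
  integral_nonneg fun y => mul_nonneg (heatKernel_pos ht _).le (h0 y)

theorem abs_heat_le (ht : 0 < t) (hM : ∀ y, |h y| ≤ M) (x : EuclideanSpace ℝ (Fin n)) :
    |heat n t h x| ≤ M := by
  have hbound : ∀ y, ‖heatKernel n t (x - y) * h y‖ ≤ heatKernel n t (x - y) * M := fun y => by
    rw [norm_mul, norm_of_nonneg (heatKernel_pos ht _).le, norm_eq_abs]
    exact mul_le_mul_of_nonneg_left (hM y) (heatKernel_pos ht _).le
  calc |heat n t h x| ≤ ∫ y, heatKernel n t (x - y) * M :=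
        norm_integral_le_of_norm_le (((integrable_heatKernel ht).comp_sub_left x).mul_const M)
          (ae_of_all _ hbound)
    _ = M := by rw [integral_mul_const, integral_heatKernel_sub ht, one_mul]

theorem measurable_heat (t : ℝ) (hm : Measurable h) : Measurable (heat n t h) :=
  (((continuous_heatKernel t).measurable.comp (measurable_fst.sub measurable_snd)).mul
    (hm.comp measurable_snd)).stronglyMeasurable.integral_prod_right'.measurable

theorem heat_heat {a b : ℝ} (ha : 0 < a) (hb : 0 < b) (hm : Measurable h) (hM : ∀ y, |h y| ≤ M)
    (x : EuclideanSpace ℝ (Fin n)) :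
    heat n a (heat n b h) x = heat n (a + b) h x := by
  have hkernels : Integrable (fun p : EuclideanSpace ℝ (Fin n) × EuclideanSpace ℝ (Fin n) =>
      heatKernel n a (x - p.1) * heatKernel n b (p.1 - p.2)) (volume.prod volume) := by
    have hprod : Integrable (fun p : EuclideanSpace ℝ (Fin n) × EuclideanSpace ℝ (Fin n) =>
        heatKernel n a (x - p.1) * heatKernel n b (-p.2)) (volume.prod volume) :=
      ((integrable_heatKernel ha).comp_sub_left x).mul_prod (integrable_heatKernel hb).comp_neg
    simpa [Function.comp_def, neg_sub] using
      (measurePreserving_prod_sub volume volume).integrable_comp_of_integrable hprod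
  have hfubini : Integrable (Function.uncurry fun y z =>
      heatKernel n a (x - y) * (heatKernel n b (y - z) * h z)) (volume.prod volume) := by
    simpa [Function.uncurry_def, mul_assoc] using
      hkernels.mul_bdd (hm.comp measurable_snd).aestronglyMeasurable
        (ae_of_all _ fun p => (norm_eq_abs (h p.2)).trans_le (hM p.2))
  calc heat n a (heat n b h) x
      = ∫ y, ∫ z, heatKernel n a (x - y) * (heatKernel n b (y - z) * h z) := by
        simp only [heat, integral_const_mul]
    _ = ∫ z, ∫ y, heatKernel n a (x - y) * (heatKernel n b (y - z) * h z) :=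
        integral_integral_swap hfubini
    _ = heat n (a + b) h x := by
        refine integral_congr_ae (ae_of_all _ fun z => ?_)
        dsimp only
        rw [← integral_heatKernel_mul_heatKernel ha hb, ← integral_mul_const]
        simp only [mul_assoc]

theorem sq_heat_le_heat_sq (ht : 0 < t) (hm : Measurable h) (hM : ∀ y, |h y| ≤ M)
    (x : EuclideanSpace ℝ (Fin n)) :
    heat n t h x ^ 2 ≤ heat n t (fun y => h y ^ 2) x := by
  set m := heat n t h x
  have hsq : ∀ y, |h y ^ 2| ≤ M ^ 2 := fun y =>
    (abs_pow (h y) 2).trans_le (pow_le_pow_left₀ (abs_nonneg _) (hM y) 2)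
  have htangent : ∀ y, heatKernel n t (x - y) * (2 * m * h y - m ^ 2)
      ≤ heatKernel n t (x - y) * h y ^ 2 := fun y =>
    mul_le_mul_of_nonneg_left (by nlinarith [sq_nonneg (h y - m)]) (heatKernel_pos ht _).le
  have hexpand : (fun y => heatKernel n t (x - y) * (2 * m * h y - m ^ 2))
      = fun y => 2 * m * (heatKernel n t (x - y) * h y) - m ^ 2 * heatKernel n t (x - y) := by
    ext y; ring
  have hI₁ := (integrable_heatKernel_sub_mul ht hm hM x).const_mul (2 * m)
  have hI₂ := ((integrable_heatKernel ht).comp_sub_left x).const_mul (m ^ 2)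
  have hlin : Integrable (fun y => heatKernel n t (x - y) * (2 * m * h y - m ^ 2)) := by
    rw [hexpand]
    exact hI₁.sub hI₂
  calc m ^ 2 = ∫ y, heatKernel n t (x - y) * (2 * m * h y - m ^ 2) := by
        rw [hexpand, integral_sub hI₁ hI₂, integral_const_mul, integral_const_mul,
          integral_heatKernel_sub ht]
        change m ^ 2 = 2 * m * m - m ^ 2 * 1
        ring
    _ ≤ heat n t (fun y => h y ^ 2) x :=
        integral_mono hlin (integrable_heatKernel_sub_mul ht (hm.pow_const 2) hsq x) htangent

end BoundedMeasurable

theorem measureReal_ball_pos {X : Type*} [PseudoMetricSpace X] [ProperSpace X]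
    [MeasurableSpace X] (μ : Measure X) [μ.IsOpenPosMeasure] [IsFiniteMeasureOnCompacts μ]
    (x : X) {r : ℝ} (hr : 0 < r) : 0 < μ.real (ball x r) :=
  ENNReal.toReal_pos (measure_ball_pos μ x hr).ne' measure_ball_lt_top.ne

theorem measureReal_ball_sqrt {s : ℝ} (hs : 0 < s) (x : EuclideanSpace ℝ (Fin n)) :
    volume.real (ball x (√s))
      = s ^ ((n : ℝ) / 2) * volume.real (ball (0 : EuclideanSpace ℝ (Fin n)) 1) := by
  rw [measureReal_def, Measure.addHaar_ball_of_pos _ _ (sqrt_pos.2 hs), ENNReal.toReal_mul,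
    ENNReal.toReal_ofReal (by positivity), finrank_euclideanSpace_fin, sqrt_eq_rpow,
    ← rpow_natCast, ← rpow_mul hs.le, measureReal_def]
  ring_nf

theorem heatKernel_ge_of_norm_lt {s : ℝ} (hs : 0 < s) {u : EuclideanSpace ℝ (Fin n)}
    (hu : ‖u‖ < √s) : (4 * π * s) ^ (-(n : ℝ) / 2) * exp (-4⁻¹) ≤ heatKernel n s u := by
  have hu2 : ‖u‖ ^ 2 ≤ s := by
    nlinarith [sqrt_nonneg s, sq_sqrt hs.le, norm_nonneg u]
  unfold heatKernel
  gcongr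
  rw [neg_div, neg_le_neg_iff, div_le_iff₀ (by positivity)]
  linarith

noncomputable def ballHeatConst (n : ℕ) : ℝ :=
  (4 * π) ^ ((n : ℝ) / 2) * exp 4⁻¹ / volume.real (ball (0 : EuclideanSpace ℝ (Fin n)) 1)

theorem ballHeatConst_pos (n : ℕ) : 0 < ballHeatConst n := by
  have := measureReal_ball_pos volume (0 : EuclideanSpace ℝ (Fin n)) one_pos
  unfold ballHeatConst
  positivity

theorem inv_measureReal_ball_le_heatKernel {s : ℝ} (hs : 0 < s) {x y : EuclideanSpace ℝ (Fin n)}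
    (hy : y ∈ ball x (√s)) :
    (volume.real (ball x (√s)))⁻¹ ≤ ballHeatConst n * heatKernel n s (x - y) := by
  have hB₁ := measureReal_ball_pos volume (0 : EuclideanSpace ℝ (Fin n)) one_pos
  calc (volume.real (ball x (√s)))⁻¹
      = ballHeatConst n * ((4 * π * s) ^ (-(n : ℝ) / 2) * exp (-4⁻¹)) := by
        rw [measureReal_ball_sqrt hs, ballHeatConst, mul_rpow (by positivity) hs.le, neg_div,
          rpow_neg (by positivity), rpow_neg hs.le, exp_neg]
        field_simp
    _ ≤ ballHeatConst n * heatKernel n s (x - y) := by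
        gcongr
        · exact (ballHeatConst_pos n).le
        · exact heatKernel_ge_of_norm_lt hs (by rwa [mem_ball, dist_comm, dist_eq_norm] at hy)

theorem setAverage_ball_le_heat {s M : ℝ} (hs : 0 < s) {f F : EuclideanSpace ℝ (Fin n) → ℝ}
    {x : EuclideanSpace ℝ (Fin n)} (hf₀ : ∀ y ∈ ball x (√s), 0 ≤ f y)
    (hfF : ∀ y ∈ ball x (√s), f y ≤ F y) (hFm : Measurable F) (hFM : ∀ y, |F y| ≤ M)
    (hF₀ : ∀ y, 0 ≤ F y) :
    ⨍ y in ball x (√s), f y ≤ ballHeatConst n * heat n s F x := by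
  set B := ball x (√s)
  have hB := measureReal_ball_pos volume x (sqrt_pos.2 hs)
  have hFB : IntegrableOn F B := Measure.integrableOn_of_bounded measure_ball_lt_top.ne
    hFm.aestronglyMeasurable (ae_of_all _ fun y => (norm_eq_abs (F y)).trans_le (hFM y))
  have hKF := (integrable_heatKernel_sub_mul hs hFm hFM x).const_mul
    (volume.real B * ballHeatConst n)
  rw [setAverage_eq, smul_eq_mul, inv_mul_le_iff₀ hB]
  calc ∫ y in B, f y ≤ ∫ y in B, F y :=
        integral_mono_of_nonneg (ae_restrict_of_forall_mem measurableSet_ball hf₀) hFB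
          (ae_restrict_of_forall_mem measurableSet_ball hfF)
    _ ≤ ∫ y in B, volume.real B * ballHeatConst n * (heatKernel n s (x - y) * F y) := by
        refine setIntegral_mono_on hFB hKF.integrableOn measurableSet_ball fun y hy => ?_
        have := mul_le_mul_of_nonneg_left (inv_measureReal_ball_le_heatKernel hs hy) hB.le
        rw [mul_inv_cancel₀ hB.ne'] at this
        nlinarith [hF₀ y]
    _ ≤ ∫ y, volume.real B * ballHeatConst n * (heatKernel n s (x - y) * F y) :=
        setIntegral_le_integral hKF (ae_of_all _ fun y => by
          have := ballHeatConst_pos n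
          have := heatKernel_pos hs (x - y)
          have := hF₀ y
          positivity)
    _ = volume.real B * (ballHeatConst n * heat n s F x) := by
        rw [integral_const_mul, heat, mul_assoc]

theorem stmt6_general (n : ℕ) :
    ∃ C : ℝ, 0 < C ∧ ∀ (h : EuclideanSpace ℝ (Fin n) → ℝ), Measurable h →
      ∀ M : ℝ, (∀ x, |h x| ≤ M) →
      ∀ (t s : ℝ) (x : EuclideanSpace ℝ (Fin n)), 0 < s → s < t / 2 →
        ⨍ y in ball x (Real.sqrt s), (heat n (t - s) h y) ^ 2
          ≤ C * heat n (3 * t / 4) (fun y => (heat n (t / 4) h y) ^ 2) x := by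
  refine ⟨ballHeatConst n, ballHeatConst_pos n, fun h hm M hM t s x hs hst => ?_⟩
  have ht₁ : 0 < t / 4 := by linarith
  have ht₂ : 0 < 3 * t / 4 - s := by linarith
  set g := heat n (t / 4) h
  have hgm : Measurable g := measurable_heat _ hm
  have hgM : ∀ y, |g y| ≤ M := abs_heat_le ht₁ hM
  have hg2m : Measurable (fun y => g y ^ 2) := hgm.pow_const 2
  have hg2M : ∀ y, |g y ^ 2| ≤ M ^ 2 := fun y =>
    (abs_pow (g y) 2).trans_le (pow_le_pow_left₀ (abs_nonneg _) (hgM y) 2)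
  have hjensen : ∀ y, heat n (t - s) h y ^ 2 ≤ heat n (3 * t / 4 - s) (fun y => g y ^ 2) y :=
    fun y => by
      rw [show t - s = 3 * t / 4 - s + t / 4 by ring, ← heat_heat ht₂ ht₁ hm hM]
      exact sq_heat_le_heat_sq ht₂ hgm hgM y
  calc ⨍ y in ball x (√s), heat n (t - s) h y ^ 2
      ≤ ballHeatConst n * heat n s (heat n (3 * t / 4 - s) fun y => g y ^ 2) x :=
        setAverage_ball_le_heat hs (fun y _ => sq_nonneg _) (fun y _ => hjensen y)
          (measurable_heat _ hg2m) (abs_heat_le ht₂ hg2M) (heat_nonneg ht₂ fun y => sq_nonneg _)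
    _ = ballHeatConst n * heat n (3 * t / 4) (fun y => g y ^ 2) x := by
        rw [heat_heat hs ht₂ hg2m hg2M, add_sub_cancel]

/-- there is `C = C(n)` such that for bounded measurable `h`, all `x`, and
`0 < s < t/2`,
`⨍_{B(x,√s)} |e^{(t−s)Δ}h(y)|² dy ≤ C · e^{(3t/4)Δ}(|e^{(t/4)Δ}h|²)(x)`. -/
theorem stmt6 (n : ℕ) (hn : 1 ≤ n) :
    ∃ C : ℝ, 0 < C ∧ ∀ (h : EuclideanSpace ℝ (Fin n) → ℝ), Measurable h →
      ∀ M : ℝ, (∀ x, |h x| ≤ M) →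
      ∀ (t s : ℝ) (x : EuclideanSpace ℝ (Fin n)), 0 < s → s < t / 2 →
        ⨍ y in ball x (Real.sqrt s), (heat n (t - s) h y) ^ 2
          ≤ C * heat n (3 * t / 4) (fun y => (heat n (t / 4) h y) ^ 2) x :=
  stmt6_general n
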